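/- arXiv:1303.3115 — 7 statements merged into one kernel-verified Lean document; each statement's English description precedes it below -/
import Mathlib

section
/- Let r ∈ (0, π/2) and α ∈ [0, π/2). Then the function ℓ ↦ g(ℓ, α, α) on [0, ∞) attains its maximum at ℓ₀ = 2·arctan(tan(r)·cos(α)), and this maximizer is unique: g(ℓ, α, α) < g(ℓ₀, α, α) for every ℓ ≥ 0 with ℓ ≠ ℓ₀. -/
open Real

/-- The candle function of the unit `4`-sphere: `s(ℓ) = sin³ ℓ` on `[0, π]`, `0` afterwards. -/
noncomputable def sphCandle (ℓ : ℝ) : ℝ :=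
  if ℓ ≤ π then (sin ℓ) ^ 3 else 0

/-- The primitive of `sphCandle` vanishing at `0`. -/
noncomputable def sphCandleI (ℓ : ℝ) : ℝ :=
  if ℓ ≤ π then 2 / 3 - (1 / 3) * (sin ℓ) ^ 2 * cos ℓ - (2 / 3) * cos ℓ else 4 / 3

/-- The primitive of `sphCandleI` vanishing at `0`. -/
noncomputable def sphCandleII (ℓ : ℝ) : ℝ :=
  if ℓ ≤ π then (2 / 3) * ℓ - (2 / 3) * sin ℓ - (1 / 9) * (sin ℓ) ^ 3
  else ((2 / 3) * π - (2 / 3) * sin π - (1 / 9) * (sin π) ^ 3) + (4 / 3) * (ℓ - π)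

/-- The dual test function for the `κ = +1`, `n = 4` isoperimetric problem. -/
noncomputable def sphG (r ℓ α β : ℝ) : ℝ :=
  (4 / 3) * ℓ - sphCandle ℓ / (9 * (tan r) ^ 2 * cos α * cos β)
    - (sphCandleI ℓ / (3 * tan r)) * (1 / cos α + 1 / cos β) - sphCandleII ℓ

/-
Write `c = (tan r cos α)⁻¹`. On `[0, π]` the function `ℓ ↦ g(ℓ, α, α)` is the trigonometric
polynomial `sphProfile c`, and on `[π, ∞)` it is constant. Let `sphPeak x` be the value of
`sphProfile x` at `2 arctan x⁻¹`. Substituting `ℓ = 2 arctan v` gives the exact identity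
`sphProfile c ℓ = sphPeak v⁻¹ + sphPeakDeriv v⁻¹ · (c - v⁻¹) - (c - v⁻¹)² sin³ ℓ / 9`:
a tangent line of `sphPeak` at `v⁻¹`, evaluated at `c`, minus a square. As `sphPeak` is
strictly convex on `[0, ∞)`, this is `< sphPeak c` unless `v⁻¹ = c`, i.e. `ℓ = ℓ₀`.
The endpoint `ℓ = π` is the tangent line at `0`, and `ℓ = 0` gives `0 < sphPeak c`.
-/

open Set

theorem StrictConvexOn.add_deriv_mul_sub_lt {S : Set ℝ} {f : ℝ → ℝ} {x y f' : ℝ}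
    (hf : StrictConvexOn ℝ S f) (hx : x ∈ S) (hy : y ∈ S) (hxy : x ≠ y)
    (hf' : HasDerivAt f f' y) : f y + f' * (x - y) < f x := by
  rcases hxy.lt_or_gt with hlt | hlt
  · have := hf.slope_lt_of_hasDerivAt hx hy hlt hf'
    rw [slope_def_field, div_lt_iff₀ (sub_pos.2 hlt)] at this
    linarith
  · have := hf.lt_slope_of_hasDerivAt hy hx hlt hf'
    rw [slope_def_field, lt_div_iff₀ (sub_pos.2 hlt)] at this
    linarith

theorem Real.sin_two_mul_arctan (v : ℝ) : sin (2 * arctan v) = 2 * v / (1 + v ^ 2) := by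
  rw [sin_two_mul, ← tan_mul_cos (cos_arctan_pos v).ne', tan_arctan]
  linear_combination 2 * v * cos_sq_arctan v

theorem Real.cos_two_mul_arctan (v : ℝ) : cos (2 * arctan v) = (1 - v ^ 2) / (1 + v ^ 2) := by
  have : (1 : ℝ) + v ^ 2 ≠ 0 := by positivity
  rw [cos_two_mul, cos_sq_arctan]
  field_simp
  ring

noncomputable def sphProfile (c ℓ : ℝ) : ℝ :=
  (2 / 3) * (ℓ + sin ℓ) + ((1 - c ^ 2) / 9) * sin ℓ ^ 3 - 4 * c / 9
    + (2 * c / 9) * sin ℓ ^ 2 * cos ℓ + (4 * c / 9) * cos ℓ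

noncomputable def sphPeak (x : ℝ) : ℝ :=
  (2 / 3) * π - (4 / 3) * arctan x + 4 * x / (9 * (1 + x ^ 2))

noncomputable def sphPeakDeriv (x : ℝ) : ℝ :=
  -(8 / 9) * (1 + 2 * x ^ 2) / (1 + x ^ 2) ^ 2

theorem hasDerivAt_sphPeak (x : ℝ) : HasDerivAt sphPeak (sphPeakDeriv x) x := by
  have hx : (1 : ℝ) + x ^ 2 ≠ 0 := by positivity
  refine (((hasDerivAt_const x (2 / 3 * π)).sub ((hasDerivAt_arctan x).const_mul (4 / 3))).add
    (((hasDerivAt_id x).const_mul 4).div (((hasDerivAt_pow 2 x).const_add 1).const_mul 9)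
      (by positivity))).congr_deriv ?_
  simp only [sphPeakDeriv, id]
  field_simp
  ring

theorem strictMonoOn_sphPeakDeriv : StrictMonoOn sphPeakDeriv (Ici 0) := by
  intro b (hb : 0 ≤ b) a _ hab
  have hsq : b ^ 2 < a ^ 2 := by nlinarith
  unfold sphPeakDeriv
  rw [div_lt_div_iff₀ (by positivity) (by positivity)]
  have hpos : (0 : ℝ) < a ^ 2 + b ^ 2 + 2 * a ^ 2 * b ^ 2 + 1 := by positivity
  nlinarith [mul_pos (sub_pos.2 hsq) hpos, sq_nonneg (a * b)]

theorem strictConvexOn_sphPeak : StrictConvexOn ℝ (Ici 0) sphPeak := by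
  have hderiv : deriv sphPeak = sphPeakDeriv := funext fun x => (hasDerivAt_sphPeak x).deriv
  refine StrictMonoOn.strictConvexOn_of_deriv (convex_Ici 0)
    (fun x _ => (hasDerivAt_sphPeak x).continuousAt.continuousWithinAt) ?_
  rw [hderiv]
  exact strictMonoOn_sphPeakDeriv.mono interior_subset

theorem sphPeak_pos {x : ℝ} (hx : 0 ≤ x) : 0 < sphPeak x := by
  have : 0 ≤ 4 * x / (9 * (1 + x ^ 2)) := by positivity
  unfold sphPeak
  linarith [arctan_lt_pi_div_two x]

theorem sphProfile_two_mul_arctan (c : ℝ) {v : ℝ} (hv : 0 < v) :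
    sphProfile c (2 * arctan v) = sphPeak v⁻¹ + sphPeakDeriv v⁻¹ * (c - v⁻¹)
      - (c - v⁻¹) ^ 2 * sin (2 * arctan v) ^ 3 / 9 := by
  have : (1 : ℝ) + v ^ 2 ≠ 0 := by positivity
  unfold sphProfile sphPeak sphPeakDeriv
  rw [arctan_inv_of_pos hv, sin_two_mul_arctan, cos_two_mul_arctan]
  field_simp
  ring

theorem sphProfile_two_mul_arctan_self {t : ℝ} (ht : 0 < t) :
    sphProfile t⁻¹ (2 * arctan t) = sphPeak t⁻¹ := by
  simp [sphProfile_two_mul_arctan t⁻¹ ht]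

theorem sphProfile_lt_sphPeak {t ℓ : ℝ} (ht : 0 < t) (hℓ : ℓ ∈ Icc 0 π)
    (hne : ℓ ≠ 2 * arctan t) : sphProfile t⁻¹ ℓ < sphPeak t⁻¹ := by
  have hc : t⁻¹ ∈ Ici 0 := inv_nonneg.2 ht.le
  rcases hℓ.1.eq_or_lt with rfl | hℓ0
  · simpa [sphProfile] using sphPeak_pos hc
  rcases hℓ.2.eq_or_lt with rfl | hℓπ
  · have h := strictConvexOn_sphPeak.add_deriv_mul_sub_lt hc self_mem_Ici
      (inv_pos.2 ht).ne' (hasDerivAt_sphPeak 0)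
    convert h using 1
    simp only [sphProfile, sphPeak, sphPeakDeriv, sin_pi, cos_pi, arctan_zero]
    ring
  obtain ⟨v, hv, rfl⟩ : ∃ v, 0 < v ∧ 2 * arctan v = ℓ :=
    ⟨tan (ℓ / 2), tan_pos_of_pos_of_lt_pi_div_two (by linarith) (by linarith),
      by rw [arctan_tan (by linarith) (by linarith)]; ring⟩
  have hvt : t⁻¹ ≠ v⁻¹ := fun h => hne (by rw [inv_inj.1 h])
  have h := strictConvexOn_sphPeak.add_deriv_mul_sub_lt hc (inv_nonneg.2 hv.le) hvt
    (hasDerivAt_sphPeak v⁻¹)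
  have hsin : 0 ≤ sin (2 * arctan v) := by rw [sin_two_mul_arctan]; positivity
  rw [sphProfile_two_mul_arctan _ hv]
  nlinarith [sq_nonneg (t⁻¹ - v⁻¹), pow_nonneg hsin 3]

theorem sphG_of_pi_le (r α β : ℝ) {ℓ : ℝ} (hℓ : π ≤ ℓ) : sphG r ℓ α β = sphG r π α β := by
  rcases hℓ.eq_or_lt with rfl | hlt
  · rfl
  simp only [sphG, sphCandle, sphCandleI, sphCandleII, if_neg hlt.not_ge, if_pos le_rfl, sin_pi,
    cos_pi]
  ring

theorem sphG_self_eq_sphProfile {r α ℓ : ℝ} (hr : tan r ≠ 0) (hα : cos α ≠ 0) (hℓ : ℓ ≤ π) :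
    sphG r ℓ α α = sphProfile (tan r * cos α)⁻¹ ℓ := by
  simp only [sphG, sphCandle, sphCandleI, sphCandleII, sphProfile, if_pos hℓ]
  field_simp
  ring

/-- For fixed `α`, the function `ℓ ↦ g(ℓ, α, α)` on `[0, ∞)` attains its maximum at
`ℓ₀ = 2 arctan (tan r · cos α)` and only there. -/
theorem sphG_lt_of_ne (r α : ℝ) (hr : r ∈ Set.Ioo 0 (π / 2)) (hα : α ∈ Set.Ico 0 (π / 2)) :
    ∀ ℓ : ℝ, 0 ≤ ℓ → ℓ ≠ 2 * arctan (tan r * cos α) →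
      sphG r ℓ α α < sphG r (2 * arctan (tan r * cos α)) α α := by
  intro ℓ hℓ hne
  have htan : 0 < tan r := tan_pos_of_pos_of_lt_pi_div_two hr.1 hr.2
  have hcos : 0 < cos α := cos_pos_of_mem_Ioo ⟨by linarith [hα.1, pi_div_two_pos], hα.2⟩
  have ht : 0 < tan r * cos α := mul_pos htan hcos
  have hℓ₀ : 2 * arctan (tan r * cos α) < π := by linarith [arctan_lt_pi_div_two (tan r * cos α)]
  rw [sphG_self_eq_sphProfile htan.ne' hcos.ne' hℓ₀.le, sphProfile_two_mul_arctan_self ht]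
  rcases le_or_gt ℓ π with hπ | hπ
  · rw [sphG_self_eq_sphProfile htan.ne' hcos.ne' hπ]
    exact sphProfile_lt_sphPeak ht ⟨hℓ, hπ⟩ hne
  · rw [sphG_of_pi_le r α α hπ.le, sphG_self_eq_sphProfile htan.ne' hcos.ne' le_rfl]
    exact sphProfile_lt_sphPeak ht ⟨pi_pos.le, le_rfl⟩ hℓ₀.ne'
end

section
/- Let V > 0 and let μ be a measure on [0, π/2] × [0, ∞) (coordinates (α, ℓ)) such that the pushforward of μ under the projection (α, ℓ) ↦ α equals twice the Lebesgue measure on [0, π/2], and such that ∫ ℓ²/2 dμ(α, ℓ) ≤ V. Then ∫ ℓ·cos(α) dμ(α, ℓ) ≤ √(πV). -/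
open Real MeasureTheory ENNReal

/-!
Cauchy–Schwarz gives `(∫ ℓ cos α dμ)² ≤ (∫ ℓ² dμ) (∫ cos² α dμ)`. The first factor is at most
`2V` by the area bound, and by the marginal condition the second one is
`2 ∫₀^{π/2} cos² α dα = π/2`, so the product is at most `πV`.
-/

theorem ENNReal.ofReal_rpow_half (x : ℝ) : ENNReal.ofReal x ^ (1 / 2 : ℝ) = ENNReal.ofReal √x := by
  rcases le_total 0 x with hx | hx
  · rw [ofReal_rpow_of_nonneg hx (by norm_num), Real.sqrt_eq_rpow]
  · simp [ENNReal.ofReal_of_nonpos hx, Real.sqrt_eq_zero'.mpr hx]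

theorem lintegral_ofReal_mul_le_sqrt_mul_sqrt {α : Type*} [MeasurableSpace α] {μ : Measure α}
    {f g : α → ℝ} (hf : AEMeasurable f μ) (hg : AEMeasurable g μ) {A B : ℝ}
    (hA : ∫⁻ x, ENNReal.ofReal (f x ^ 2) ∂μ ≤ ENNReal.ofReal A)
    (hB : ∫⁻ x, ENNReal.ofReal (g x ^ 2) ∂μ ≤ ENNReal.ofReal B) :
    ∫⁻ x, ENNReal.ofReal (f x * g x) ∂μ ≤ ENNReal.ofReal (√A * √B) := by
  have enorm_sq (h : α → ℝ) (x : α) : ‖h x‖ₑ ^ (2 : ℝ) = ENNReal.ofReal (h x ^ 2) := by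
    rw [← ofReal_norm, ofReal_rpow_of_nonneg (norm_nonneg _) zero_le_two]
    norm_num
  calc ∫⁻ x, ENNReal.ofReal (f x * g x) ∂μ
      ≤ ∫⁻ x, ‖f x‖ₑ * ‖g x‖ₑ ∂μ :=
        lintegral_mono fun x ↦ (ofReal_le_enorm _).trans_eq (enorm_mul _ _)
    _ ≤ (∫⁻ x, ‖f x‖ₑ ^ (2 : ℝ) ∂μ) ^ (1 / 2 : ℝ) * (∫⁻ x, ‖g x‖ₑ ^ (2 : ℝ) ∂μ) ^ (1 / 2 : ℝ) :=
        ENNReal.lintegral_mul_le_Lp_mul_Lq μ Real.HolderConjugate.two_two hf.enorm hg.enorm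
    _ ≤ ENNReal.ofReal A ^ (1 / 2 : ℝ) * ENNReal.ofReal B ^ (1 / 2 : ℝ) := by
        simp only [enorm_sq]
        gcongr
    _ = ENNReal.ofReal (√A * √B) := by
        rw [ENNReal.ofReal_rpow_half, ENNReal.ofReal_rpow_half, ENNReal.ofReal_mul (sqrt_nonneg A)]

theorem lintegral_Icc_ofReal_cos_sq :
    ∫⁻ a in Set.Icc 0 (π / 2), ENNReal.ofReal (cos a ^ 2) = ENNReal.ofReal (π / 4) := by
  have hint : IntegrableOn (fun a ↦ cos a ^ 2) (Set.Icc 0 (π / 2)) :=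
    (continuous_cos.pow 2).integrableOn_Icc
  rw [← ofReal_integral_eq_lintegral_ofReal hint (.of_forall fun a ↦ sq_nonneg _),
    integral_Icc_eq_integral_Ioc, ← intervalIntegral.integral_of_le (by positivity),
    integral_cos_sq]
  simp only [cos_pi_div_two, sin_zero]
  ring_nf

theorem littlePrince_core_general (V : ℝ) (μ : Measure (ℝ × ℝ))
    (hmarg : μ.map Prod.fst = (2 : ℝ≥0∞) • volume.restrict (Set.Icc 0 (π / 2)))
    (harea : ∫⁻ x, ENNReal.ofReal (x.2 ^ 2 / 2) ∂μ ≤ ENNReal.ofReal V) :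
    ∫⁻ x, ENNReal.ofReal (x.2 * cos x.1) ∂μ ≤ ENNReal.ofReal (Real.sqrt (π * V)) := by
  have hlength : ∫⁻ x, ENNReal.ofReal (x.2 ^ 2) ∂μ ≤ ENNReal.ofReal (2 * V) := by
    calc ∫⁻ x, ENNReal.ofReal (x.2 ^ 2) ∂μ = 2 * ∫⁻ x, ENNReal.ofReal (x.2 ^ 2 / 2) ∂μ := by
          rw [← lintegral_const_mul' _ _ ofNat_ne_top]
          congr with x
          rw [← ofReal_ofNat 2, ← ENNReal.ofReal_mul zero_le_two]
          ring_nf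
      _ ≤ ENNReal.ofReal (2 * V) := by
          rw [ENNReal.ofReal_mul zero_le_two, ofReal_ofNat]
          gcongr
  have hangle : ∫⁻ x, ENNReal.ofReal (cos x.1 ^ 2) ∂μ = ENNReal.ofReal (π / 2) := by
    have hmeas : Measurable fun a ↦ ENNReal.ofReal (cos a ^ 2) := by fun_prop
    rw [← lintegral_map hmeas measurable_fst, hmarg,
      lintegral_smul_measure, lintegral_Icc_ofReal_cos_sq, smul_eq_mul, ← ofReal_ofNat 2,
      ← ENNReal.ofReal_mul zero_le_two]
    ring_nf
  calc ∫⁻ x, ENNReal.ofReal (x.2 * cos x.1) ∂μ ≤ ENNReal.ofReal (√(2 * V) * √(π / 2)) :=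
        lintegral_ofReal_mul_le_sqrt_mul_sqrt measurable_snd.aemeasurable
          (continuous_cos.measurable.comp measurable_fst).aemeasurable hlength hangle.le
    _ = ENNReal.ofReal √(π * V) := by
        rw [← sqrt_mul' _ (by positivity)]
        ring_nf

/-- Analytic core of the Little Prince theorem: if `μ` is a measure on
`[0, π/2] × [0, ∞)` (coordinates `(α, ℓ)`) whose `α`-marginal is twice Lebesgue
measure on `[0, π/2]` and with `∫ ℓ²/2 dμ ≤ V`, then `∫ ℓ·cos α dμ ≤ √(πV)`. -/
theorem littlePrince_core (V : ℝ) (hV : 0 < V) (μ : Measure (ℝ × ℝ))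
    (hsupp : μ ((Set.Icc 0 (π / 2) ×ˢ Set.Ici (0 : ℝ))ᶜ) = 0)
    (hmarg : μ.map Prod.fst = (2 : ℝ≥0∞) • volume.restrict (Set.Icc 0 (π / 2)))
    (harea : ∫⁻ x, ENNReal.ofReal (x.2 ^ 2 / 2) ∂μ ≤ ENNReal.ofReal V) :
    ∫⁻ x, ENNReal.ofReal (x.2 * cos x.1) ∂μ ≤ ENNReal.ofReal (Real.sqrt (π * V)) :=
  littlePrince_core_general V μ hmarg harea
end

section
/- Let V > 0, let r = (2V/π²)^{1/4} (so that V = π²r⁴/2 is the volume of the Euclidean 4-ball of radius r), and let A_B = 2π²r³ (the volume of its boundary 3-sphere). Let A ≥ 0 and let μ be a measure on [0, ∞) × [0, π/2)² (coordinates (ℓ, α, β)) such that: (i) ∫ ℓ³/(cos(α)·cos(β)) dμ ≤ A·A_B and this integral is finite; (ii) ∫ ℓ dμ ≥ 2π²·V; (iii) ∫ √(cos(α)·cos(β)) dμ ≤ (π²/4)·A_B and this integral is finite. Then A ≥ A_B. -/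
/-!
For `c = cos α cos β > 0`, `s = √c` and `ℓ ≥ 0`, the identity
`ℓ³ - 12r²s²ℓ + 16r³s³ = (ℓ - 2rs)²(ℓ + 4rs) ≥ 0` gives the pointwise bound
`ℓ ≤ ℓ³ / (12 r² c) + (4r/3) √c`, sharp for Euclidean balls of radius `r`. Integrating it against `μ` and inserting (i)–(iii) yields
`π⁴ r⁴ = 2π²V ≤ A π² r / 6 + 2π⁴ r⁴ / 3`, i.e. `A ≥ 2π² r³ = A_B`.
-/

open Real MeasureTheory ENNReal

theorem le_cube_div_add_mul_sqrt {r ℓ c : ℝ} (hr : 0 < r) (hℓ : 0 ≤ ℓ) (hc : 0 < c) :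
    ℓ ≤ 1 / (12 * r ^ 2) * (ℓ ^ 3 / c) + 4 * r / 3 * √c := by
  obtain ⟨s, hs, rfl⟩ : ∃ s, 0 < s ∧ c = s ^ 2 := ⟨√c, sqrt_pos.2 hc, (sq_sqrt hc.le).symm⟩
  have amgm : 1 / (12 * r ^ 2) * (ℓ ^ 3 / s ^ 2) + 4 * r / 3 * s - ℓ
      = (ℓ - 2 * r * s) ^ 2 * (ℓ + 4 * r * s) / (12 * r ^ 2 * s ^ 2) := by
    field_simp
    ring
  rw [sqrt_sq hs.le, ← sub_nonneg, amgm]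
  positivity

theorem ofReal_le_cube_div_add_mul_sqrt {r c : ℝ} (hr : 0 < r) (hc : 0 < c) (ℓ : ℝ) :
    ENNReal.ofReal ℓ ≤ ENNReal.ofReal (1 / (12 * r ^ 2)) * ENNReal.ofReal (ℓ ^ 3 / c)
      + ENNReal.ofReal (4 * r / 3) * ENNReal.ofReal √c := by
  rcases le_total ℓ 0 with hℓ | hℓ
  · simp [ENNReal.ofReal_of_nonpos hℓ]
  · rw [← ENNReal.ofReal_mul (by positivity), ← ENNReal.ofReal_mul (by positivity),
      ← ENNReal.ofReal_add (by positivity) (by positivity)]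
    exact ENNReal.ofReal_le_ofReal (le_cube_div_add_mul_sqrt hr hℓ hc)

theorem lintegral_le_mul_add_mul_of_ae_le {α : Type*} [MeasurableSpace α] {μ : Measure α}
    {f g h : α → ℝ≥0∞} {a b : ℝ≥0∞} (hg : AEMeasurable g μ) (hh : AEMeasurable h μ)
    (hfgh : ∀ᵐ x ∂μ, f x ≤ a * g x + b * h x) :
    ∫⁻ x, f x ∂μ ≤ a * ∫⁻ x, g x ∂μ + b * ∫⁻ x, h x ∂μ := calc
  ∫⁻ x, f x ∂μ ≤ ∫⁻ x, a * g x + b * h x ∂μ := lintegral_mono_ae hfgh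
  _ = a * ∫⁻ x, g x ∂μ + b * ∫⁻ x, h x ∂μ := by
    rw [lintegral_add_left' (hg.const_mul a), lintegral_const_mul'' a hg,
      lintegral_const_mul'' b hh]

theorem two_mul_pi_sq_mul_cube_le {r a : ℝ} (hr : 0 < r)
    (h : π ^ 4 * r ^ 4 ≤ 1 / (12 * r ^ 2) * (a * (2 * π ^ 2 * r ^ 3))
      + 4 * r / 3 * (π ^ 2 / 4 * (2 * π ^ 2 * r ^ 3))) :
    2 * π ^ 2 * r ^ 3 ≤ a := by
  have hπr : 0 < π ^ 2 * r := by positivity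
  have h' : π ^ 2 * r * (2 * π ^ 2 * r ^ 3) ≤ π ^ 2 * r * a := by
    field_simp at h
    nlinarith
  exact le_of_mul_le_mul_left h' hπr

theorem croke_LP_core_general (V : ℝ) (hV : 0 < V) (r A_B : ℝ)
    (hr : r = (2 * V / π ^ 2) ^ ((1 : ℝ) / 4)) (hAB : A_B = 2 * π ^ 2 * r ^ 3)
    (A : ℝ) (μ : Measure (ℝ × ℝ × ℝ))
    (hsupp : μ ((Set.Ici (0 : ℝ) ×ˢ (Set.Ico 0 (π / 2) ×ˢ Set.Ico 0 (π / 2)))ᶜ) = 0)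
    (h1 : ∫⁻ x, ENNReal.ofReal (x.1 ^ 3 / (cos x.2.1 * cos x.2.2)) ∂μ
            ≤ ENNReal.ofReal (A * A_B))
    (h2 : ENNReal.ofReal (2 * π ^ 2 * V) ≤ ∫⁻ x, ENNReal.ofReal x.1 ∂μ)
    (h3 : ∫⁻ x, ENNReal.ofReal (Real.sqrt (cos x.2.1 * cos x.2.2)) ∂μ
            ≤ ENNReal.ofReal ((π ^ 2 / 4) * A_B)) :
    A_B ≤ A := by
  have hr0 : 0 < r := hr ▸ by positivity
  have hr4 : r ^ 4 = 2 * V / π ^ 2 := by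
    rw [hr, ← Real.rpow_natCast, ← rpow_mul (by positivity)]
    norm_num
  have hV_r : 2 * π ^ 2 * V = π ^ 4 * r ^ 4 := by
    rw [hr4]
    field_simp
  have hcos : ∀ᵐ x ∂μ, 0 < cos x.2.1 * cos x.2.2 := by
    filter_upwards [ae_iff.2 hsupp] with x ⟨_, hα, hβ⟩
    exact mul_pos (cos_pos_of_mem_Ioo ⟨by linarith [hα.1, pi_pos], hα.2⟩)
      (cos_pos_of_mem_Ioo ⟨by linarith [hβ.1, pi_pos], hβ.2⟩)
  have hLP := lintegral_le_mul_add_mul_of_ae_le (by fun_prop) (by fun_prop)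
    (hcos.mono fun x hx => ofReal_le_cube_div_add_mul_sqrt hr0 hx x.1)
  subst hAB
  -- `ofReal` truncates `A * A_B` at `0`, so only `max A 0` is controlled by (i).
  have hLP_real : ENNReal.ofReal (2 * π ^ 2 * V)
      ≤ ENNReal.ofReal (1 / (12 * r ^ 2)) * ENNReal.ofReal (max A 0 * (2 * π ^ 2 * r ^ 3))
        + ENNReal.ofReal (4 * r / 3) * ENNReal.ofReal (π ^ 2 / 4 * (2 * π ^ 2 * r ^ 3)) := by
    refine h2.trans (hLP.trans ?_)
    gcongr
    exact h1.trans (ENNReal.ofReal_le_ofReal (by gcongr; exact le_max_left A 0))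
  rw [← ENNReal.ofReal_mul (by positivity), ← ENNReal.ofReal_mul (by positivity),
    ← ENNReal.ofReal_add (by positivity) (by positivity),
    ENNReal.ofReal_le_ofReal_iff (by positivity), hV_r] at hLP_real
  exact (le_max_iff.1 (two_mul_pi_sq_mul_cube_le hr0 hLP_real)).resolve_right
    (not_le.2 (by positivity))

/-- The linear-programming core of Croke's 4-dimensional isoperimetric theorem (`κ = 0`):
`V > 0`, `r = (2V/π²)^{1/4}`, `A_B = 2π²r³`; if a nonnegative measure `μ` on chords
`(ℓ, α, β) ∈ [0, ∞) × [0, π/2)²` satisfies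
(i) `∫ ℓ³/(cos α · cos β) dμ ≤ A·A_B`, (ii) `∫ ℓ dμ ≥ 2π²·V`, and
(iii) `∫ √(cos α · cos β) dμ ≤ (π²/4)·A_B`, then `A ≥ A_B`. -/
theorem croke_LP_core (V : ℝ) (hV : 0 < V) (r A_B : ℝ)
    (hr : r = (2 * V / π ^ 2) ^ ((1 : ℝ) / 4)) (hAB : A_B = 2 * π ^ 2 * r ^ 3)
    (A : ℝ) (hA : 0 ≤ A) (μ : Measure (ℝ × ℝ × ℝ))
    (hsupp : μ ((Set.Ici (0 : ℝ) ×ˢ (Set.Ico 0 (π / 2) ×ˢ Set.Ico 0 (π / 2)))ᶜ) = 0)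
    (h1 : ∫⁻ x, ENNReal.ofReal (x.1 ^ 3 / (cos x.2.1 * cos x.2.2)) ∂μ
            ≤ ENNReal.ofReal (A * A_B))
    (h2 : ENNReal.ofReal (2 * π ^ 2 * V) ≤ ∫⁻ x, ENNReal.ofReal x.1 ∂μ)
    (h3 : ∫⁻ x, ENNReal.ofReal (Real.sqrt (cos x.2.1 * cos x.2.2)) ∂μ
            ≤ ENNReal.ofReal ((π ^ 2 / 4) * A_B)) :
    A_B ≤ A :=
  croke_LP_core_general V hV r A_B hr hAB A μ hsupp h1 h2 h3
end

section
/- Let V > 0, let r = √(V/π) (so that V = πr² is the area of the Euclidean disc of radius r), and let A_B = 2πr (its boundary length). Let A ≥ 0 and let μ be a measure on [0, ∞) × [0, π/2)² (coordinates (ℓ, α, β)) such that: (i) ∫ (ℓ²/4)·(1/cos(α) + 1/cos(β)) dμ ≤ A·V and this integral is finite; (ii) ∫ ℓ dμ ≥ 2π·V; (iii) ∫ 4r²/(1/cos(α) + 1/cos(β)) dμ ≤ πr²·A_B and this integral is finite. Then A ≥ A_B. -/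
open Real MeasureTheory ENNReal

/-!
Pointwise, AM–GM gives `2rℓ ≤ (ℓ²/4)·s + 4r²/s` for every `s > 0`, in particular for
`s = 1/cos α + 1/cos β`. Integrating against `μ` and using (ii), (i) and (iii),
`2r · 2πV ≤ A·V + πr²·A_B = A·V + V·2πr`, so `2πr ≤ A`.
-/

lemma two_mul_mul_le_sq_mul_add_sq_div {a b c : ℝ} (hc : 0 < c) :
    2 * a * b ≤ a ^ 2 * c + b ^ 2 / c := by
  have h : a ^ 2 * c + b ^ 2 / c - 2 * a * b = (a * c - b) ^ 2 / c := by
    field_simp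
    ring
  rw [← sub_nonneg, h]
  positivity

lemma ofReal_mul_ofReal_le_ofReal_add_ofReal {r ℓ s : ℝ} (hr : 0 ≤ r) (hs : 0 < s) :
    ENNReal.ofReal (2 * r) * ENNReal.ofReal ℓ ≤
      ENNReal.ofReal (ℓ ^ 2 / 4 * s) + ENNReal.ofReal (4 * r ^ 2 / s) := by
  have hamgm : 2 * r * ℓ ≤ ℓ ^ 2 / 4 * s + 4 * r ^ 2 / s := by
    convert two_mul_mul_le_sq_mul_add_sq_div (a := ℓ / 2) (b := 2 * r) hs using 1 <;> ring
  rw [← ENNReal.ofReal_mul (by positivity)]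
  exact (ENNReal.ofReal_le_ofReal hamgm).trans ENNReal.ofReal_add_le

lemma ofReal_mul_lintegral_le_lintegral_add_lintegral {X : Type*} [MeasurableSpace X]
    (μ : Measure X) {ℓ s : X → ℝ} (hℓ : Measurable ℓ) (hs : Measurable s)
    (hs_pos : ∀ᵐ x ∂μ, 0 < s x) {r : ℝ} (hr : 0 ≤ r) :
    ENNReal.ofReal (2 * r) * ∫⁻ x, ENNReal.ofReal (ℓ x) ∂μ ≤
      (∫⁻ x, ENNReal.ofReal (ℓ x ^ 2 / 4 * s x) ∂μ) +
        ∫⁻ x, ENNReal.ofReal (4 * r ^ 2 / s x) ∂μ := by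
  rw [← lintegral_const_mul' _ _ ENNReal.ofReal_ne_top,
    ← lintegral_add_left (by fun_prop)]
  exact lintegral_mono_ae <| hs_pos.mono fun x hx =>
    ofReal_mul_ofReal_le_ofReal_add_ofReal hr hx

lemma sec_add_sec_pos {α β : ℝ} (hα : α ∈ Set.Ico 0 (π / 2)) (hβ : β ∈ Set.Ico 0 (π / 2)) :
    0 < 1 / cos α + 1 / cos β := by
  have hcos : ∀ θ ∈ Set.Ico 0 (π / 2), 0 < cos θ := fun θ hθ =>
    cos_pos_of_mem_Ioo ⟨by linarith [pi_pos, hθ.1], hθ.2⟩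
  have := hcos α hα
  have := hcos β hβ
  positivity

-- `ofReal` truncates at `0`, so `a * v` may be negative; that case is ruled out by `0 < b * v`.
lemma le_of_ofReal_two_mul_mul_le {a b v : ℝ} (hb : 0 < b) (hv : 0 < v)
    (h : ENNReal.ofReal (2 * b * v) ≤ ENNReal.ofReal (a * v) + ENNReal.ofReal (b * v)) :
    b ≤ a := by
  have hbv : 0 < b * v := mul_pos hb hv
  have hreal := ENNReal.toReal_mono (by finiteness) h
  rw [ENNReal.toReal_add ENNReal.ofReal_ne_top ENNReal.ofReal_ne_top] at hreal
  simp only [toReal_ofReal'] at hreal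
  rw [max_eq_left hbv.le, max_eq_left (by positivity : 0 ≤ 2 * b * v)] at hreal
  rcases le_max_iff.mp (show b * v ≤ max (a * v) 0 by linarith) with h | h
  · exact le_of_mul_le_mul_right h hv
  · linarith

theorem weil_LP_core_general (V : ℝ) (hV : 0 < V) (r A_B : ℝ)
    (hr : r = Real.sqrt (V / π)) (hAB : A_B = 2 * π * r)
    (A : ℝ) (μ : Measure (ℝ × ℝ × ℝ))
    (hsupp : μ ((Set.Ici (0 : ℝ) ×ˢ (Set.Ico 0 (π / 2) ×ˢ Set.Ico 0 (π / 2)))ᶜ) = 0)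
    (h1 : ∫⁻ x, ENNReal.ofReal ((x.1 ^ 2 / 4) * (1 / cos x.2.1 + 1 / cos x.2.2)) ∂μ
            ≤ ENNReal.ofReal (A * V))
    (h2 : ENNReal.ofReal (2 * π * V) ≤ ∫⁻ x, ENNReal.ofReal x.1 ∂μ)
    (h3 : ∫⁻ x, ENNReal.ofReal (4 * r ^ 2 / (1 / cos x.2.1 + 1 / cos x.2.2)) ∂μ
            ≤ ENNReal.ofReal (π * r ^ 2 * A_B)) :
    A_B ≤ A := by
  have hVπ : 0 < V / π := div_pos hV pi_pos
  have hr_pos : 0 < r := hr ▸ sqrt_pos.mpr hVπ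
  have hV_eq : π * r ^ 2 = V := by
    rw [hr, sq_sqrt hVπ.le]
    field_simp
  have hsec : ∀ᵐ x ∂μ, 0 < 1 / cos x.2.1 + 1 / cos x.2.2 :=
    (measure_eq_zero_iff_ae_notMem.mp hsupp).mono fun x hx => by
      obtain ⟨-, hα, hβ⟩ := not_not.mp hx
      exact sec_add_sec_pos hα hβ
  have hbound := (ofReal_mul_lintegral_le_lintegral_add_lintegral μ measurable_fst
    (by fun_prop) hsec hr_pos.le).trans (add_le_add h1 h3)
  refine le_of_ofReal_two_mul_mul_le (hAB ▸ by positivity) hV ?_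
  calc ENNReal.ofReal (2 * A_B * V)
      = ENNReal.ofReal (2 * r) * ENNReal.ofReal (2 * π * V) := by
        rw [← ENNReal.ofReal_mul (by positivity), hAB]
        ring_nf
    _ ≤ ENNReal.ofReal (2 * r) * ∫⁻ x, ENNReal.ofReal x.1 ∂μ := mul_le_mul_right h2 _
    _ ≤ ENNReal.ofReal (A * V) + ENNReal.ofReal (π * r ^ 2 * A_B) := hbound
    _ = ENNReal.ofReal (A * V) + ENNReal.ofReal (A_B * V) := by rw [hV_eq, mul_comm V]

/-- The linear-programming core of Weil's planar isoperimetric theorem (`κ = 0`, `n = 2`):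
`V > 0`, `r = √(V/π)`, `A_B = 2πr`; if a nonnegative measure `μ` on chords
`(ℓ, α, β) ∈ [0, ∞) × [0, π/2)²` satisfies
(i) `∫ (ℓ²/4)·(1/cos α + 1/cos β) dμ ≤ A·V`, (ii) `∫ ℓ dμ ≥ 2π·V`, and
(iii) `∫ 4r²/(1/cos α + 1/cos β) dμ ≤ πr²·A_B`, then `A ≥ A_B`. -/
theorem weil_LP_core (V : ℝ) (hV : 0 < V) (r A_B : ℝ)
    (hr : r = Real.sqrt (V / π)) (hAB : A_B = 2 * π * r)
    (A : ℝ) (hA : 0 ≤ A) (μ : Measure (ℝ × ℝ × ℝ))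
    (hsupp : μ ((Set.Ici (0 : ℝ) ×ˢ (Set.Ico 0 (π / 2) ×ˢ Set.Ico 0 (π / 2)))ᶜ) = 0)
    (h1 : ∫⁻ x, ENNReal.ofReal ((x.1 ^ 2 / 4) * (1 / cos x.2.1 + 1 / cos x.2.2)) ∂μ
            ≤ ENNReal.ofReal (A * V))
    (h2 : ENNReal.ofReal (2 * π * V) ≤ ∫⁻ x, ENNReal.ofReal x.1 ∂μ)
    (h3 : ∫⁻ x, ENNReal.ofReal (4 * r ^ 2 / (1 / cos x.2.1 + 1 / cos x.2.2)) ∂μ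
            ≤ ENNReal.ofReal (π * r ^ 2 * A_B)) :
    A_B ≤ A :=
  weil_LP_core_general V hV r A_B hr hAB A μ hsupp h1 h2 h3
end

section
/- Let A_B, V > 0 and A ≥ 0, let μ be a measure on [0, ∞) × [0, π/2)² (coordinates (ℓ, α, β)), let a, b, c, d ≥ 0 be real numbers and f : [0, π/2)² → [0, ∞) a measurable function, with all integrals below finite. Assume the dual constraints: a·A_B + b·V ≤ 1, and for all (ℓ, α, β) ∈ [0, ∞) × [0, π/2)²: d·ℓ ≤ a·ℓ³/(cos(α)·cos(β)) + b·(ℓ⁴/8)·(1/cos(α) + 1/cos(β)) + c·ℓ⁵/20 + f(α, β). Assume the primal constraints: ∫ ℓ³/(cos(α)·cos(β)) dμ ≤ A·A_B; ∫ (ℓ⁴/8)·(1/cos(α) + 1/cos(β)) dμ ≤ A·V; ∫ ℓ⁵/20 dμ ≤ V²; ∫ ℓ dμ ≥ 2π²·V; and ∫ f(α, β) dμ ≤ A_B·∫₀^{π/2} f(α, α)·4π·sin²(α)·cos(α) dα. Then −c·V² + 2π²·d·V − A_B·∫₀^{π/2} f(α, α)·4π·sin²(α)·cos(α) dα ≤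 A. -/
open Real MeasureTheory ENNReal

/-- The weak-duality principle for the linear programming problem underlying the
4-dimensional isoperimetric inequality with curvature bound `κ = 0`. -/
theorem weak_duality_LP (A_B V : ℝ) (hAB : 0 < A_B) (hV : 0 < V) (A : ℝ) (hA : 0 ≤ A)
    (μ : Measure (ℝ × ℝ × ℝ))
    (hsupp : μ ((Set.Ici (0 : ℝ) ×ˢ (Set.Ico 0 (π / 2) ×ˢ Set.Ico 0 (π / 2)))ᶜ) = 0)
    (a b c d : ℝ) (ha : 0 ≤ a) (hb : 0 ≤ b) (hc : 0 ≤ c) (hd : 0 ≤ d)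
    (f : ℝ → ℝ → ℝ) (hf_meas : Measurable (Function.uncurry f))
    (hf_nonneg : ∀ α β : ℝ, α ∈ Set.Ico 0 (π / 2) → β ∈ Set.Ico 0 (π / 2) → 0 ≤ f α β)
    -- dual constraints
    (hdual1 : a * A_B + b * V ≤ 1)
    (hdual2 : ∀ ℓ α β : ℝ, 0 ≤ ℓ → α ∈ Set.Ico 0 (π / 2) → β ∈ Set.Ico 0 (π / 2) →
      d * ℓ ≤ a * ℓ ^ 3 / (cos α * cos β) + b * (ℓ ^ 4 / 8) * (1 / cos α + 1 / cos β)
        + c * ℓ ^ 5 / 20 + f α β)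
    -- finiteness of all integrals
    (hI1 : Integrable (fun x : ℝ × ℝ × ℝ => x.1 ^ 3 / (cos x.2.1 * cos x.2.2)) μ)
    (hI2 : Integrable (fun x : ℝ × ℝ × ℝ => (x.1 ^ 4 / 8) * (1 / cos x.2.1 + 1 / cos x.2.2)) μ)
    (hI3 : Integrable (fun x : ℝ × ℝ × ℝ => x.1 ^ 5 / 20) μ)
    (hI4 : Integrable (fun x : ℝ × ℝ × ℝ => x.1) μ)
    (hI5 : Integrable (fun x : ℝ × ℝ × ℝ => f x.2.1 x.2.2) μ)
    (hI6 : IntervalIntegrable (fun α => f α α * (4 * π * (sin α) ^ 2 * cos α)) volume 0 (π / 2))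
    -- primal constraints
    (hprimal1 : ∫ x, x.1 ^ 3 / (cos x.2.1 * cos x.2.2) ∂μ ≤ A * A_B)
    (hprimal2 : ∫ x, (x.1 ^ 4 / 8) * (1 / cos x.2.1 + 1 / cos x.2.2) ∂μ ≤ A * V)
    (hprimal3 : ∫ x, x.1 ^ 5 / 20 ∂μ ≤ V ^ 2)
    (hprimal4 : 2 * π ^ 2 * V ≤ ∫ x, x.1 ∂μ)
    (hprimal5 : ∫ x, f x.2.1 x.2.2 ∂μ
        ≤ A_B * ∫ α in (0 : ℝ)..(π / 2), f α α * (4 * π * (sin α) ^ 2 * cos α)) :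
    -c * V ^ 2 + 2 * π ^ 2 * d * V
        - A_B * ∫ α in (0 : ℝ)..(π / 2), f α α * (4 * π * (sin α) ^ 2 * cos α) ≤ A := by

  set F := ∫ α in (0 : ℝ)..(π / 2), f α α * (4 * π * (sin α) ^ 2 * cos α) with hF
  have hS : (Set.Ici (0 : ℝ) ×ˢ (Set.Ico 0 (π / 2) ×ˢ Set.Ico 0 (π / 2))) ∈ ae μ :=
    MeasureTheory.mem_ae_iff.2 hsupp
  have hae : ∀ᵐ x ∂μ, d * x.1 ≤ a * (x.1 ^ 3 / (cos x.2.1 * cos x.2.2))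
      + b * ((x.1 ^ 4 / 8) * (1 / cos x.2.1 + 1 / cos x.2.2))
      + c * (x.1 ^ 5 / 20) + f x.2.1 x.2.2 := by
    filter_upwards [hS] with x hx
    obtain ⟨h1, h2, h3⟩ := hx
    have := hdual2 x.1 x.2.1 x.2.2 h1 h2 h3
    linarith [this, (by ring : a * x.1 ^ 3 / (cos x.2.1 * cos x.2.2)
      + b * (x.1 ^ 4 / 8) * (1 / cos x.2.1 + 1 / cos x.2.2) + c * x.1 ^ 5 / 20 + f x.2.1 x.2.2
      = a * (x.1 ^ 3 / (cos x.2.1 * cos x.2.2))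
      + b * ((x.1 ^ 4 / 8) * (1 / cos x.2.1 + 1 / cos x.2.2))
      + c * (x.1 ^ 5 / 20) + f x.2.1 x.2.2)]
  have h1 := hI1.const_mul a
  have h2 := hI2.const_mul b
  have h3 := hI3.const_mul c
  have key := MeasureTheory.integral_mono_ae (hI4.const_mul d) (((h1.add h2).add h3).add hI5) hae
  simp only [Pi.add_apply] at key
  rw [MeasureTheory.integral_add, MeasureTheory.integral_add, MeasureTheory.integral_add,
    MeasureTheory.integral_const_mul d, MeasureTheory.integral_const_mul a,
    MeasureTheory.integral_const_mul b, MeasureTheory.integral_const_mul c] at key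

  have e1 : a * (∫ x, x.1 ^ 3 / (cos x.2.1 * cos x.2.2) ∂μ) ≤ a * (A * A_B) :=
    mul_le_mul_of_nonneg_left hprimal1 ha
  have e2 : b * (∫ x, (x.1 ^ 4 / 8) * (1 / cos x.2.1 + 1 / cos x.2.2) ∂μ) ≤ b * (A * V) :=
    mul_le_mul_of_nonneg_left hprimal2 hb
  have e3 : c * (∫ x, x.1 ^ 5 / 20 ∂μ) ≤ c * V ^ 2 :=
    mul_le_mul_of_nonneg_left hprimal3 hc
  have e4 : d * (2 * π ^ 2 * V) ≤ d * ∫ x, x.1 ∂μ :=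
    mul_le_mul_of_nonneg_left hprimal4 hd
  nlinarith [mul_le_mul_of_nonneg_left hdual1 hA]
  · exact h1
  · exact h2
  · exact h1.add h2
  · exact h3
  · exact (h1.add h2).add h3
  · exact hI5
end

section
/- For every ℓ ∈ (0, π): 3·sin²(ℓ)·cos(ℓ)/tan²(ℓ/2) + 6·sin³(ℓ)/tan(ℓ/2) + 9·(2/3 − (1/3)·sin²(ℓ)·cos(ℓ) − (2/3)·cos(ℓ)) = 12. -/
open Real

/- With `s = sin (ℓ / 2)` and `c = cos (ℓ / 2)` the double-angle formulas make both sides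
polynomial in `s, c` once the denominators `s, c` are cleared, and they agree modulo
`s ^ 2 + c ^ 2 = 1`. -/
theorem sph_consistency_of_tan_half_ne_zero {ℓ : ℝ} (h : tan (ℓ / 2) ≠ 0) :
    3 * (sin ℓ) ^ 2 * cos ℓ / (tan (ℓ / 2)) ^ 2 + 6 * (sin ℓ) ^ 3 / tan (ℓ / 2)
      + 9 * (2 / 3 - (1 / 3) * (sin ℓ) ^ 2 * cos ℓ - (2 / 3) * cos ℓ) = 12 := by
  rw [tan_eq_sin_div_cos, div_ne_zero_iff] at h
  obtain ⟨hs, hc⟩ := h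
  have hpy : sin (ℓ / 2) ^ 2 + cos (ℓ / 2) ^ 2 = 1 := sin_sq_add_cos_sq _
  rw [show ℓ = 2 * (ℓ / 2) by ring, sin_two_mul, cos_two_mul, tan_eq_sin_div_cos]
  field_simp
  linear_combination (72 * cos (ℓ / 2) ^ 4 + 36 * cos (ℓ / 2) ^ 2) * hpy

/-- Consistency identity for the dual variables in the case `κ = +1`, `n = 4`. -/
theorem sph_consistency (ℓ : ℝ) (hℓ : ℓ ∈ Set.Ioo 0 π) :
    3 * (sin ℓ) ^ 2 * cos ℓ / (tan (ℓ / 2)) ^ 2 + 6 * (sin ℓ) ^ 3 / tan (ℓ / 2)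
      + 9 * (2 / 3 - (1 / 3) * (sin ℓ) ^ 2 * cos ℓ - (2 / 3) * cos ℓ) = 12 := by
  obtain ⟨h0, hπ⟩ := hℓ
  refine sph_consistency_of_tan_half_ne_zero (tan_pos_of_pos_of_lt_pi_div_two ?_ ?_).ne' <;>
    linarith
end

section
/- For every ℓ > 0: 3·sinh²(ℓ)·cosh(ℓ)/tanh²(ℓ/2) − 6·sinh³(ℓ)/tanh(ℓ/2) + 9·(2/3 + (1/3)·sinh²(ℓ)·cosh(ℓ) − (2/3)·cosh(ℓ)) = 12. -/
open Real

/-! Writing `c = cosh ℓ`, the half-angle identity `sinh ℓ / tanh (ℓ / 2) = 1 + c` together with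
`sinh² ℓ = c² - 1` turns the left-hand side into a polynomial in `c`, which collapses to `12`. -/

theorem Real.sinh_div_tanh_half {x : ℝ} (hx : x ≠ 0) : sinh x / tanh (x / 2) = 1 + cosh x := by
  have hhalf : sinh (x / 2) ≠ 0 := by simpa using hx
  have hx2 : x = 2 * (x / 2) := by ring
  rw [hx2, sinh_two_mul, cosh_two_mul, tanh_eq_sinh_div_cosh, ← hx2]
  field_simp
  linear_combination cosh_sq (x / 2)

/-- Consistency identity for the dual variables in the case `κ = −1`, `n = 4`. -/
theorem hyp_consistency (ℓ : ℝ) (hℓ : 0 < ℓ) :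
    3 * (sinh ℓ) ^ 2 * cosh ℓ / (tanh (ℓ / 2)) ^ 2 - 6 * (sinh ℓ) ^ 3 / tanh (ℓ / 2)
      + 9 * (2 / 3 + (1 / 3) * (sinh ℓ) ^ 2 * cosh ℓ - (2 / 3) * cosh ℓ) = 12 := by
  have hsinh_sq : sinh ℓ ^ 2 = cosh ℓ ^ 2 - 1 := by rw [cosh_sq]; ring
  calc _ = 3 * cosh ℓ * (sinh ℓ / tanh (ℓ / 2)) ^ 2
          - 6 * sinh ℓ ^ 2 * (sinh ℓ / tanh (ℓ / 2))
          + 9 * (2 / 3 + (1 / 3) * sinh ℓ ^ 2 * cosh ℓ - (2 / 3) * cosh ℓ) := by ring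
    _ = 12 := by rw [sinh_div_tanh_half hℓ.ne', hsinh_sq]; ring
end
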